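/- The equation p + σ((|p|−1)/(w|p|)) p = p̃ over vectors p ∈ ℝⁿ with |p| > 1 has the unique solution p = ((w|p̃| + σ)/(w|p̃| + σ|p̃|)) p̃, provided |p̃| > 1 and w, σ > 0. -/
import Mathlib


theorem resolvent_unique_solution (n : ℕ) (w σ : ℝ) (hw : 0 < w) (hσ : 0 < σ)
    (ptilde : EuclideanSpace ℝ (Fin n)) (hp : 1 < ‖ptilde‖) :
    let p₀ : EuclideanSpace ℝ (Fin n) :=
      ((w * ‖ptilde‖ + σ) / (w * ‖ptilde‖ + σ * ‖ptilde‖)) • ptilde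
    (1 < ‖p₀‖ ∧ p₀ + σ • (((‖p₀‖ - 1) / (w * ‖p₀‖)) • p₀) = ptilde) ∧
    ∀ p : EuclideanSpace ℝ (Fin n), 1 < ‖p‖ →
      p + σ • (((‖p‖ - 1) / (w * ‖p‖)) • p) = ptilde → p = p₀ := by
  intro p₀
  set s := ‖ptilde‖ with hsdef
  have hs1 : 1 < s := hp
  have hs0 : 0 < s := lt_trans one_pos hs1
  set c : ℝ := (w * s + σ) / (w * s + σ * s) with hcdef
  have hden : 0 < w * s + σ * s := by positivity
  have hc0 : 0 < c := by positivity
  set t₀ : ℝ := (w * s + σ) / (w + σ) with ht0def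
  have hwσ : 0 < w + σ := by positivity
  have hnorm : ‖p₀‖ = t₀ := by
    show ‖c • ptilde‖ = t₀
    rw [norm_smul, Real.norm_of_nonneg hc0.le, ← hsdef, hcdef, ht0def]
    field_simp
  have ht0pos : 0 < t₀ := by positivity
  have ht0gt : 1 < t₀ := by
    rw [ht0def, lt_div_iff₀ hwσ]
    nlinarith
  have hkey : (1 + σ * ((t₀ - 1) / (w * t₀))) * c = 1 := by
    rw [ht0def, hcdef]
    have h1 : w * ((w * s + σ) / (w + σ)) ≠ 0 := by positivity
    field_simp
    ring
  have ha0 : 0 < 1 + σ * ((t₀ - 1) / (w * t₀)) := by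
    have h := mul_nonneg hσ.le (div_nonneg (by linarith : (0:ℝ) ≤ t₀ - 1) (by positivity : (0:ℝ) ≤ w * t₀))
    linarith
  constructor
  · refine ⟨hnorm ▸ ht0gt, ?_⟩
    rw [hnorm]
    show c • ptilde + σ • (((t₀ - 1) / (w * t₀)) • (c • ptilde)) = ptilde
    have : c • ptilde + σ • (((t₀ - 1) / (w * t₀)) • (c • ptilde))
        = ((1 + σ * ((t₀ - 1) / (w * t₀))) * c) • ptilde := by
      rw [smul_smul, smul_smul]
      module
    rw [this, hkey, one_smul]
  · intro p hp1 heq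
    set t := ‖p‖ with htdef
    have ht0' : 0 < t := lt_trans one_pos hp1
    set a : ℝ := 1 + σ * ((t - 1) / (w * t)) with hadef
    have hapos : 0 < a := by
      have h := mul_nonneg hσ.le (div_nonneg (by linarith : (0:ℝ) ≤ t - 1) (by positivity : (0:ℝ) ≤ w * t))
      rw [hadef]; linarith
    have h1 : a • p = ptilde := by
      rw [← heq, hadef, smul_smul]
      module
    have h2 : a * t = s := by
      have := congrArg norm h1
      rwa [norm_smul, Real.norm_of_nonneg hapos.le, ← htdef, ← hsdef] at this
    have ht : t = t₀ := by
      rw [ht0def]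
      rw [hadef] at h2
      have hw' : w ≠ 0 := hw.ne'
      have ht' : t ≠ 0 := ht0'.ne'
      field_simp at h2 ⊢
      nlinarith [h2]
    have hA : a⁻¹ = c := by
      apply inv_eq_of_mul_eq_one_right
      rw [hadef, ht]
      exact hkey
    have : p = a⁻¹ • ptilde := by
      rw [← h1, smul_smul, inv_mul_cancel₀ hapos.ne', one_smul]
    rw [this, hA]
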